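/- arXiv:math/0504458 — 2 statements merged into one kernel-verified Lean document; each statement's English description precedes it below -/
import Mathlib

section
/- The bilinear form B(ť,t) := (ť·χ)(s₀(t)) / χ(s₀(t)) is independent of the choice of χ ∈ X₁(T̂) and of the splitting homomorphism s₀ : N → T̂ used to define it, where ť·χ denotes the action of ť on characters. -/
/-!
STATEMENT 4: Let `T̂ → T` be a `U(1)`-central extension of an abelian group `T`
(central subgroup `ι : U → T̂`, projection `π`, exact), and let `Ť` act on `T̂`
by endomorphisms `φ ť` covering the identity of `T` and fixing the central `U`.
For a weight-one character `χ ∈ X₁(T̂)` the induced action is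
`(ť·χ) = χ ∘ φ ť`, and `B(ť,t) := (ť·χ)(s₀ t) / χ(s₀ t)` for a splitting
homomorphism `s₀ : T → T̂`.  Claim: `B` is independent of the choice of
`χ ∈ X₁(T̂)` and of the splitting homomorphism `s₀`.
-/

theorem statement4 {U T That Tv : Type*} [CommGroup U] [CommGroup T]
    [Group That] [Group Tv]
    (ι : U →* That) (π : That →* T)
    (hcentral : ∀ (u : U) (x : That), ι u * x = x * ι u)
    (hexact : MonoidHom.range ι = MonoidHom.ker π)
    (φ : Tv → That →* That)
    (hφπ : ∀ (tv : Tv) (x : That), π (φ tv x) = π x)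
    (hφι : ∀ (tv : Tv) (u : U), φ tv (ι u) = ι u)
    -- two weight-one characters:
    (χ χ' : That →* U) (hχ : ∀ u : U, χ (ι u) = u) (hχ' : ∀ u : U, χ' (ι u) = u)
    -- two splitting homomorphisms:
    (s₀ s₀' : T →* That) (hs₀ : ∀ t : T, π (s₀ t) = t) (hs₀' : ∀ t : T, π (s₀' t) = t) :
    ∀ (tv : Tv) (t : T),
      χ (φ tv (s₀ t)) * (χ (s₀ t))⁻¹ = χ' (φ tv (s₀' t)) * (χ' (s₀' t))⁻¹ := by
  intro tv t
  -- φ tv (s₀ t) differs from s₀ t by a central element ι u₁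
  have h1 : φ tv (s₀ t) * (s₀ t)⁻¹ ∈ MonoidHom.ker π := by
    simp [MonoidHom.mem_ker, hφπ]
  rw [← hexact] at h1
  obtain ⟨u₁, hu₁⟩ := h1
  have hx : φ tv (s₀ t) = ι u₁ * s₀ t := by
    rw [hu₁]; group
  -- s₀' t differs from s₀ t by a central element ι u
  have h2 : s₀' t * (s₀ t)⁻¹ ∈ MonoidHom.ker π := by
    simp [MonoidHom.mem_ker, hs₀, hs₀']
  rw [← hexact] at h2
  obtain ⟨u, hu⟩ := h2
  have hy : s₀' t = ι u * s₀ t := by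
    rw [hu]; group
  have hx' : φ tv (s₀' t) = ι u * (ι u₁ * s₀ t) := by
    rw [hy, map_mul, hφι, hx]
  rw [hx, hx', hy]
  simp [hχ, hχ', mul_comm, mul_assoc, mul_left_comm]
end

section
/- With notation as above, the product × is equivariant: for ŵ, ŵ' in Ŵ = Ť ⋊ W, one has (ŵχ) × (ŵ̃'χ') = (ŵ, ŵ')(χ × χ'), where the tilde automorphism of Ŵ is given by ťw ↦ ť^{-1}w. In particular × restricts to a bijection X₁^{reg}(T̂) × X₁^{reg}(T̂) → X₁^{reg}(T̂×T̂^) and descends to a bijection of orbit sets (X₁(T̂)/Ŵ) × (X₁(T̂)/Ŵ) → X₁(T̂×T̂^)/(Ŵ×Ŵ). -/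
/-!
STATEMENT 14: Equivariance of the product `×` of weight-one characters: for
`ŵ, ŵ' ∈ Ŵ = Ť ⋊ W` one has `(ŵχ) × (ŵ̃'χ') = (ŵ, ŵ')(χ × χ')`, where the
tilde automorphism is `ťw ↦ ť⁻¹w` and `Ŵ × Ŵ` acts on product characters via
the product action twisted by tilde in the second factor.  In particular `×`
restricts to a bijection on regular characters and descends to a bijection of
orbit sets.
-/

section

variable {U That Tv W : Type*} [CommGroup U] [Group That] [CommGroup Tv] [Group W]
  (φ : W →* MulAut Tv)

/-- The tilde automorphism `ťw ↦ ť⁻¹w` of `Ŵ = Ť ⋊ W`. -/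
def tilde (g : Tv ⋊[φ] W) : Tv ⋊[φ] W :=
  SemidirectProduct.inl g.left⁻¹ * SemidirectProduct.inr g.right

variable (A : (Tv ⋊[φ] W) →* MulAut That)

/-- The action of `Ŵ` on characters of `T̂` induced by an action `A` of `Ŵ` on
`T̂` by automorphisms. -/
def actChar (g : Tv ⋊[φ] W) (χ : That →* U) : That →* U :=
  χ.comp (A g⁻¹).toMonoidHom

/-- The product character `(χ × χ')(t̂, t̂') = χ(t̂)·χ'(t̂')⁻¹`. -/
def pairChar (χ χ' : That →* U) : That × That →* U :=
  (χ.comp (MonoidHom.fst That That)) * (χ'.comp (MonoidHom.snd That That))⁻¹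

/-- The action of `Ŵ × Ŵ` on product characters: the product action twisted
by the tilde automorphism in the second factor. -/
def actPair (gg : (Tv ⋊[φ] W) × (Tv ⋊[φ] W)) (ψ : That × That →* U) :
    That × That →* U :=
  ψ.comp (MonoidHom.prodMap (A gg.1⁻¹).toMonoidHom (A (tilde φ gg.2)⁻¹).toMonoidHom)

end

section Aux

variable {U That Tv W : Type*} [CommGroup U] [Group That] [CommGroup Tv] [Group W]
  {φ : W →* MulAut Tv} {A : (Tv ⋊[φ] W) →* MulAut That}

lemma tilde_left (g : Tv ⋊[φ] W) : (tilde φ g).left = g.left⁻¹ := by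
  simp [tilde]

lemma tilde_right (g : Tv ⋊[φ] W) : (tilde φ g).right = g.right := by
  simp [tilde]

lemma tilde_tilde (g : Tv ⋊[φ] W) : tilde φ (tilde φ g) = tilde φ (tilde φ g) := rfl

lemma tilde_invol (g : Tv ⋊[φ] W) : tilde φ (tilde φ g) = g := by
  apply SemidirectProduct.ext <;> simp [tilde_left, tilde_right]

lemma tilde_one : tilde φ (1 : Tv ⋊[φ] W) = 1 := by
  apply SemidirectProduct.ext <;> simp [tilde_left, tilde_right]

lemma tilde_eq_one_iff {g : Tv ⋊[φ] W} : tilde φ g = 1 ↔ g = 1 := by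
  constructor
  · intro h
    have := congrArg (tilde φ) h
    rwa [tilde_invol, tilde_one] at this
  · rintro rfl; exact tilde_one

lemma actChar_one (χ : That →* U) : actChar φ A 1 χ = χ := by
  ext x; simp [actChar]

lemma pairChar_apply (χ χ' : That →* U) (x y : That) :
    pairChar χ χ' (x, y) = χ x * (χ' y)⁻¹ := rfl

lemma pairChar_injective {χ χ' μ μ' : That →* U}
    (h : pairChar χ χ' = pairChar μ μ') : χ = μ ∧ χ' = μ' := by
  constructor
  · ext x
    have := congrFun (congrArg DFunLike.coe h) (x, 1)
    simpa [pairChar_apply] using this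
  · ext y
    have := congrFun (congrArg DFunLike.coe h) (1, y)
    simpa [pairChar_apply] using this

lemma actPair_eq (gg : (Tv ⋊[φ] W) × (Tv ⋊[φ] W)) (χ χ' : That →* U) :
    actPair φ A gg (pairChar χ χ') =
      pairChar (actChar φ A gg.1 χ) (actChar φ A (tilde φ gg.2) χ') := by
  ext x
  simp [actPair, pairChar, actChar]

end Aux

theorem statement14 {U That Tv W : Type*} [CommGroup U] [Group That]
    [CommGroup Tv] [Group W] (φ : W →* MulAut Tv)
    (A : (Tv ⋊[φ] W) →* MulAut That)
    (ι : U →* That)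
    (hcentral : ∀ (u : U) (x : That), ι u * x = x * ι u)
    (hA : ∀ (g : Tv ⋊[φ] W) (z : U), A g (ι z) = ι z)
    -- `Ť` acts freely on weight-one characters:
    (hfree : ∀ (t : Tv) (χ : That →* U), (∀ z : U, χ (ι z) = z) →
      actChar φ A (SemidirectProduct.inl t) χ = χ → t = 1) :
    -- (a) equivariance: `(ŵχ) × (ŵ̃'χ') = (ŵ, ŵ')(χ × χ')`:
    (∀ (g g' : Tv ⋊[φ] W) (χ χ' : That →* U),
      pairChar (actChar φ A g χ) (actChar φ A (tilde φ g') χ') =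
        actPair φ A (g, g') (pairChar χ χ')) ∧
    -- (b) `×` preserves and reflects regularity of weight-one characters:
    (∀ χ χ' : That →* U, (∀ z : U, χ (ι z) = z) → (∀ z : U, χ' (ι z) = z) →
      (((∀ g : Tv ⋊[φ] W, actChar φ A g χ = χ → g = 1) ∧
        (∀ g : Tv ⋊[φ] W, actChar φ A g χ' = χ' → g = 1)) ↔
      (∀ gg : (Tv ⋊[φ] W) × (Tv ⋊[φ] W),
        actPair φ A gg (pairChar χ χ') = pairChar χ χ' → gg = 1))) ∧
    -- (c) `×` descends to a bijection of orbit sets: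
    (∀ χ χ' μ μ' : That →* U, (∀ z : U, χ (ι z) = z) → (∀ z : U, χ' (ι z) = z) →
      (∀ z : U, μ (ι z) = z) → (∀ z : U, μ' (ι z) = z) →
      ((∃ gg : (Tv ⋊[φ] W) × (Tv ⋊[φ] W),
          actPair φ A gg (pairChar χ χ') = pairChar μ μ') ↔
        ((∃ g : Tv ⋊[φ] W, actChar φ A g χ = μ) ∧
          (∃ g : Tv ⋊[φ] W, actChar φ A g χ' = μ')))) := by
  refine ⟨?_, ?_, ?_⟩
  · intro g g' χ χ'
    rw [actPair_eq]
  · intro χ χ' hχ hχ'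
    constructor
    · rintro ⟨h1, h2⟩ ⟨g, g'⟩ hgg
      rw [actPair_eq] at hgg
      obtain ⟨e1, e2⟩ := pairChar_injective hgg
      have hg : g = 1 := h1 g e1
      have hg' : g' = 1 := tilde_eq_one_iff.mp (h2 _ e2)
      simp [hg, hg', Prod.ext_iff]
    · intro h
      constructor
      · intro g hg
        have : ((g, 1) : (Tv ⋊[φ] W) × (Tv ⋊[φ] W)) = 1 := by
          apply h
          rw [actPair_eq]
          simp only [tilde_one, actChar_one, hg]
        exact congrArg Prod.fst this
      · intro g hg
        have : ((1, tilde φ g) : (Tv ⋊[φ] W) × (Tv ⋊[φ] W)) = 1 := by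
          apply h
          rw [actPair_eq]
          simp only [tilde_invol, actChar_one, hg]
        have h2 : tilde φ g = 1 := congrArg Prod.snd this
        exact tilde_eq_one_iff.mp h2
  · intro χ χ' μ μ' _ _ _ _
    constructor
    · rintro ⟨⟨g, g'⟩, hgg⟩
      rw [actPair_eq] at hgg
      obtain ⟨e1, e2⟩ := pairChar_injective hgg
      exact ⟨⟨g, e1⟩, ⟨tilde φ g', e2⟩⟩
    · rintro ⟨⟨g, hg⟩, ⟨g', hg'⟩⟩
      refine ⟨(g, tilde φ g'), ?_⟩
      rw [actPair_eq]
      simp only [tilde_invol, hg, hg']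
end
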